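/- Let θ₀ ∈ ℝⁿ, L₀ : ℝⁿ → ℝ, and let S be a nonzero linear subspace of ℝⁿ. Let (X, μ) be a measure space, J : X → ℝ^{m×n}, and M : X → ℝ^{m×m} with each M(x) symmetric and M(x) ⪯ βI for a constant β > 0; assume x ↦ J(x)ᵀM(x)J(x) and x ↦ J(x)ᵀJ(x) are Bochner integrable, and set H₀ := ∫ J(x)ᵀM(x)J(x) dμ(x) (a symmetric matrix) and G := ∫ J(x)ᵀJ(x) dμ(x). Define the drift radius ε(S) by ε(S)² := sup{ vᵀGv : v ∈ S, ‖v‖₂ = 1 }. Assume (Taylor control at a stationary point) there exist ρ₀ > 0 and C_T ≥ 0 such that |L₀(θ₀ + Δθ) − L₀(θ₀) − ½ ΔθᵀH₀Δθ| ≤ C_T ‖Δθ‖₂³ for all Δθ with ‖Δθ‖₂ ≤ ρ₀. Then for every ρ with 0 < ρ ≤ ρ₀ and every Δθ ∈ S with ‖Δθ‖₂ ≤ ρ, L₀(θ₀ + Δθ) − L₀(θ₀) ≤ (β/2) ε(S)² ρ² + C_T ρ³; in particular the local worst-case forgetting F_max(S, ρ) := sup{ L₀(θ₀ + Δθ) −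 L₀(θ₀) : Δθ ∈ S, ‖Δθ‖₂ ≤ ρ } satisfies F_max(S, ρ) ≤ (β/2) ε(S)² ρ² + C_T ρ³. -/

import Mathlib

open MeasureTheory Matrix
open scoped RealInnerProductSpace

/-- The quadratic form `v ↦ vᵀ A v` of a matrix `A`, on Euclidean space. -/
noncomputable def quadForm {n : ℕ} (A : Matrix (Fin n) (Fin n) ℝ)
    (v : EuclideanSpace ℝ (Fin n)) : ℝ :=
  ⟪v, Matrix.toEuclideanLin A v⟫

/-! Pointwise, `M(x) ⪯ βI` gives `J(x)ᵀM(x)J(x) ⪯ β J(x)ᵀJ(x)`; integrating, `H₀ ⪯ β G` as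
quadratic forms. On `S` the form of `G` is at most `ε(S)² ‖v‖²` by homogeneity, so the
second-order Taylor term is at most `(β/2) ε(S)² ρ²` and the remainder adds `C_T ρ³`. -/

section EntrywiseIntegral

variable {X : Type*} [MeasurableSpace X] {μ : Measure X} {ι κ : Type*} [Fintype ι] [Fintype κ]

lemma integrable_dotProduct_mulVec {A : X → Matrix ι κ ℝ}
    (hA : ∀ i j, Integrable (fun x => A x i j) μ) (u : ι → ℝ) (w : κ → ℝ) :
    Integrable (fun x => u ⬝ᵥ A x *ᵥ w) μ := by
  simp only [dotProduct, mulVec, Finset.mul_sum]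
  exact integrable_finsetSum _ fun i _ =>
    integrable_finsetSum _ fun j _ => ((hA i j).mul_const _).const_mul _

lemma dotProduct_mulVec_integral {A : X → Matrix ι κ ℝ}
    (hA : ∀ i j, Integrable (fun x => A x i j) μ) (u : ι → ℝ) (w : κ → ℝ) :
    u ⬝ᵥ (Matrix.of fun i j => ∫ x, A x i j ∂μ) *ᵥ w = ∫ x, u ⬝ᵥ A x *ᵥ w ∂μ := by
  simp only [dotProduct, mulVec, Finset.mul_sum]
  rw [integral_finsetSum _ fun i _ =>
    integrable_finsetSum _ fun j _ => ((hA i j).mul_const _).const_mul _]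
  refine Finset.sum_congr rfl fun i _ => ?_
  rw [integral_finsetSum _ fun j _ => ((hA i j).mul_const _).const_mul _]
  refine Finset.sum_congr rfl fun j _ => ?_
  rw [of_apply, integral_const_mul, integral_mul_const]

lemma dotProduct_mulVec_integral_nonneg {A : X → Matrix ι ι ℝ}
    (hA : ∀ i j, Integrable (fun x => A x i j) μ) (hpsd : ∀ x, (A x).PosSemidef) (v : ι → ℝ) :
    0 ≤ v ⬝ᵥ (Matrix.of fun i j => ∫ x, A x i j ∂μ) *ᵥ v := by
  rw [dotProduct_mulVec_integral hA]
  refine integral_nonneg fun x => ?_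
  simpa only [star_trivial, Pi.zero_apply] using (hpsd x).dotProduct_mulVec_nonneg v

lemma dotProduct_mulVec_integral_le {A B : X → Matrix ι ι ℝ} {c : ℝ}
    (hA : ∀ i j, Integrable (fun x => A x i j) μ) (hB : ∀ i j, Integrable (fun x => B x i j) μ)
    (hle : ∀ x, (c • B x - A x).PosSemidef) (v : ι → ℝ) :
    v ⬝ᵥ (Matrix.of fun i j => ∫ x, A x i j ∂μ) *ᵥ v ≤
      c * v ⬝ᵥ (Matrix.of fun i j => ∫ x, B x i j ∂μ) *ᵥ v := by
  rw [dotProduct_mulVec_integral hA, dotProduct_mulVec_integral hB, ← integral_const_mul]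
  refine integral_mono (integrable_dotProduct_mulVec hA v v)
    ((integrable_dotProduct_mulVec hB v v).const_mul c) fun x => ?_
  have h := (hle x).dotProduct_mulVec_nonneg v
  rwa [star_trivial, sub_mulVec, dotProduct_sub, smul_mulVec, dotProduct_smul, smul_eq_mul,
    sub_nonneg] at h

end EntrywiseIntegral

lemma posSemidef_smul_transpose_mul_self_sub {m n : Type*} [Fintype m] [DecidableEq m] [Fintype n]
    {β : ℝ} {M : Matrix m m ℝ} (hM : (β • 1 - M).PosSemidef) (J : Matrix m n ℝ) :
    (β • (Jᵀ * J) - Jᵀ * M * J).PosSemidef := by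
  have h := hM.conjTranspose_mul_mul_same J
  rw [conjTranspose_eq_transpose_of_trivial] at h
  convert h using 1
  simp only [Matrix.mul_sub, Matrix.sub_mul, Matrix.mul_smul, Matrix.smul_mul, Matrix.mul_one]

section QuadForm

variable {n : ℕ}

lemma quadForm_eq_dotProduct (A : Matrix (Fin n) (Fin n) ℝ) (v : EuclideanSpace ℝ (Fin n)) :
    quadForm A v = v.ofLp ⬝ᵥ A *ᵥ v.ofLp := by
  simp [quadForm, PiLp.inner_apply, dotProduct, mul_comm]

lemma quadForm_smul (A : Matrix (Fin n) (Fin n) ℝ) (c : ℝ) (v : EuclideanSpace ℝ (Fin n)) :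
    quadForm A (c • v) = c ^ 2 * quadForm A v := by
  simp only [quadForm, _root_.map_smul, real_inner_smul_left, real_inner_smul_right]
  ring

lemma quadForm_le_opNorm_mul_sq (A : Matrix (Fin n) (Fin n) ℝ) (v : EuclideanSpace ℝ (Fin n)) :
    quadForm A v ≤ ‖toEuclideanCLM (𝕜 := ℝ) A‖ * ‖v‖ ^ 2 :=
  calc quadForm A v ≤ ‖v‖ * ‖toEuclideanCLM (𝕜 := ℝ) A v‖ := real_inner_le_norm _ _
    _ ≤ ‖v‖ * (‖toEuclideanCLM (𝕜 := ℝ) A‖ * ‖v‖) := by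
      gcongr; exact ContinuousLinearMap.le_opNorm _ _
    _ = ‖toEuclideanCLM (𝕜 := ℝ) A‖ * ‖v‖ ^ 2 := by ring

/-- The squared drift radius `ε(S)²`. -/
noncomputable def driftSq (G : Matrix (Fin n) (Fin n) ℝ)
    (S : Submodule ℝ (EuclideanSpace ℝ (Fin n))) : ℝ :=
  sSup {r : ℝ | ∃ v : EuclideanSpace ℝ (Fin n), v ∈ S ∧ ‖v‖ = 1 ∧ r = quadForm G v}

variable {G : Matrix (Fin n) (Fin n) ℝ} {S : Submodule ℝ (EuclideanSpace ℝ (Fin n))}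

lemma driftSq_nonneg (hG : ∀ v, 0 ≤ quadForm G v) : 0 ≤ driftSq G S :=
  Real.sSup_nonneg fun _ ⟨v, _, _, hr⟩ => hr ▸ hG v

lemma quadForm_le_driftSq_mul_sq {v : EuclideanSpace ℝ (Fin n)} (hv : v ∈ S) :
    quadForm G v ≤ driftSq G S * ‖v‖ ^ 2 := by
  rcases eq_or_ne v 0 with rfl | hv0
  · simp [quadForm]
  have hnorm : ‖v‖ ≠ 0 := norm_ne_zero_iff.2 hv0
  have hbdd : BddAbove {r : ℝ | ∃ v : EuclideanSpace ℝ (Fin n),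
      v ∈ S ∧ ‖v‖ = 1 ∧ r = quadForm G v} := by
    refine ⟨‖toEuclideanCLM (𝕜 := ℝ) G‖, ?_⟩
    rintro _ ⟨u, -, hu, rfl⟩
    simpa [hu] using quadForm_le_opNorm_mul_sq G u
  have hunit : quadForm G (‖v‖⁻¹ • v) ≤ driftSq G S := by
    refine le_csSup hbdd ⟨_, S.smul_mem _ hv, ?_, rfl⟩
    rw [norm_smul, norm_inv, norm_norm, inv_mul_cancel₀ hnorm]
  rw [quadForm_smul, inv_pow, inv_mul_le_iff₀ (by positivity)] at hunit
  linarith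

end QuadForm

theorem stmt8_general
    (n : ℕ)
    (θ₀ : EuclideanSpace ℝ (Fin n))
    (L₀ : EuclideanSpace ℝ (Fin n) → ℝ)
    (S : Submodule ℝ (EuclideanSpace ℝ (Fin n)))
    (X : Type*) [MeasurableSpace X] (μ : Measure X)
    (m : ℕ)
    (J : X → Matrix (Fin m) (Fin n) ℝ)
    (M : X → Matrix (Fin m) (Fin m) ℝ)
    (β : ℝ) (hβ : 0 < β)
    (hMle : ∀ x, (β • (1 : Matrix (Fin m) (Fin m) ℝ) - M x).PosSemidef)
    (hintH : ∀ i j, Integrable (fun x => ((J x)ᵀ * M x * J x) i j) μ)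
    (hintG : ∀ i j, Integrable (fun x => ((J x)ᵀ * J x) i j) μ)
    (H₀ : Matrix (Fin n) (Fin n) ℝ)
    (hH₀ : ∀ i j, H₀ i j = ∫ x, ((J x)ᵀ * M x * J x) i j ∂μ)
    (G : Matrix (Fin n) (Fin n) ℝ)
    (hG : ∀ i j, G i j = ∫ x, ((J x)ᵀ * J x) i j ∂μ)
    (epsSq : ℝ)
    (heps : epsSq = sSup {r : ℝ | ∃ v : EuclideanSpace ℝ (Fin n),
      v ∈ S ∧ ‖v‖ = 1 ∧ r = quadForm G v})
    (ρ₀ C_T : ℝ) (hCT : 0 ≤ C_T)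
    (hTaylor : ∀ Δθ : EuclideanSpace ℝ (Fin n), ‖Δθ‖ ≤ ρ₀ →
      |L₀ (θ₀ + Δθ) - L₀ θ₀ - (1 / 2) * quadForm H₀ Δθ| ≤ C_T * ‖Δθ‖ ^ 3) :
    ∀ ρ : ℝ, 0 < ρ → ρ ≤ ρ₀ →
      (∀ Δθ ∈ S, ‖Δθ‖ ≤ ρ →
          L₀ (θ₀ + Δθ) - L₀ θ₀ ≤ (β / 2) * epsSq * ρ ^ 2 + C_T * ρ ^ 3) ∧
        sSup {r : ℝ | ∃ Δθ : EuclideanSpace ℝ (Fin n),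
            Δθ ∈ S ∧ ‖Δθ‖ ≤ ρ ∧ r = L₀ (θ₀ + Δθ) - L₀ θ₀} ≤
          (β / 2) * epsSq * ρ ^ 2 + C_T * ρ ^ 3 := by
  have hH₀_eq : H₀ = Matrix.of fun i j => ∫ x, ((J x)ᵀ * M x * J x) i j ∂μ := Matrix.ext hH₀
  have hG_eq : G = Matrix.of fun i j => ∫ x, ((J x)ᵀ * J x) i j ∂μ := Matrix.ext hG
  have hHG (v : EuclideanSpace ℝ (Fin n)) : quadForm H₀ v ≤ β * quadForm G v := by
    simpa only [quadForm_eq_dotProduct, hH₀_eq, hG_eq] using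
      dotProduct_mulVec_integral_le hintH hintG
        (fun x => posSemidef_smul_transpose_mul_self_sub (hMle x) (J x)) v.ofLp
  have hG_nonneg (v : EuclideanSpace ℝ (Fin n)) : 0 ≤ quadForm G v := by
    simpa only [quadForm_eq_dotProduct, hG_eq, conjTranspose_eq_transpose_of_trivial] using
      dotProduct_mulVec_integral_nonneg hintG (fun x => posSemidef_conjTranspose_mul_self (J x))
        v.ofLp
  have heps_nonneg : 0 ≤ epsSq := heps ▸ driftSq_nonneg hG_nonneg
  intro ρ hρ hρρ₀
  have hbound : ∀ Δθ ∈ S, ‖Δθ‖ ≤ ρ →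
      L₀ (θ₀ + Δθ) - L₀ θ₀ ≤ (β / 2) * epsSq * ρ ^ 2 + C_T * ρ ^ 3 := by
    intro Δθ hΔS hΔρ
    have hquad : quadForm H₀ Δθ ≤ β * (epsSq * ‖Δθ‖ ^ 2) :=
      (hHG Δθ).trans (by gcongr; exact heps ▸ quadForm_le_driftSq_mul_sq hΔS)
    have htaylor := (abs_le.1 (hTaylor Δθ (hΔρ.trans hρρ₀))).2
    calc L₀ (θ₀ + Δθ) - L₀ θ₀ ≤ (β / 2) * epsSq * ‖Δθ‖ ^ 2 + C_T * ‖Δθ‖ ^ 3 := by linarith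
      _ ≤ (β / 2) * epsSq * ρ ^ 2 + C_T * ρ ^ 3 := by gcongr
  refine ⟨hbound, csSup_le ⟨0, 0, S.zero_mem, by simpa using hρ.le, by simp⟩ ?_⟩
  rintro _ ⟨Δθ, hΔS, hΔρ, rfl⟩
  exact hbound Δθ hΔS hΔρ

/-- **Worst-case forgetting is controlled by functional drift.**
Let `θ₀ ∈ ℝⁿ`, `L₀ : ℝⁿ → ℝ`, and `S` a nonzero subspace of `ℝⁿ`.  Let
`J : X → ℝ^{m×n}` and `M : X → ℝ^{m×m}` with each `M(x)` symmetric and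
`M(x) ⪯ βI` (`β > 0`), and set (entrywise Bochner integrals)
`H₀ = ∫ J(x)ᵀ M(x) J(x) dμ` (a symmetric matrix) and `G = ∫ J(x)ᵀ J(x) dμ`;
the drift radius obeys `ε(S)² = sup { vᵀGv : v ∈ S, ‖v‖₂ = 1 }`.
Under Taylor control at a stationary point, for every `0 < ρ ≤ ρ₀` and every
`Δθ ∈ S` with `‖Δθ‖₂ ≤ ρ`, `L₀(θ₀+Δθ) − L₀(θ₀) ≤ (β/2) ε(S)² ρ² + C_T ρ³`;
in particular the local worst-case forgetting `F_max(S, ρ)` obeys the same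
bound. -/
theorem stmt8
    (n : ℕ)
    (θ₀ : EuclideanSpace ℝ (Fin n))
    (L₀ : EuclideanSpace ℝ (Fin n) → ℝ)
    (S : Submodule ℝ (EuclideanSpace ℝ (Fin n))) (hS : S ≠ ⊥)
    (X : Type*) [MeasurableSpace X] (μ : Measure X)
    (m : ℕ)
    (J : X → Matrix (Fin m) (Fin n) ℝ)
    (M : X → Matrix (Fin m) (Fin m) ℝ)
    (β : ℝ) (hβ : 0 < β)
    (hMsymm : ∀ x, (M x).IsSymm)
    (hMle : ∀ x, (β • (1 : Matrix (Fin m) (Fin m) ℝ) - M x).PosSemidef)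
    (hintH : ∀ i j, Integrable (fun x => ((J x)ᵀ * M x * J x) i j) μ)
    (hintG : ∀ i j, Integrable (fun x => ((J x)ᵀ * J x) i j) μ)
    (H₀ : Matrix (Fin n) (Fin n) ℝ) (hH₀symm : H₀.IsSymm)
    (hH₀ : ∀ i j, H₀ i j = ∫ x, ((J x)ᵀ * M x * J x) i j ∂μ)
    (G : Matrix (Fin n) (Fin n) ℝ)
    (hG : ∀ i j, G i j = ∫ x, ((J x)ᵀ * J x) i j ∂μ)
    (epsSq : ℝ)
    (heps : epsSq = sSup {r : ℝ | ∃ v : EuclideanSpace ℝ (Fin n),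
      v ∈ S ∧ ‖v‖ = 1 ∧ r = quadForm G v})
    (ρ₀ C_T : ℝ) (hρ₀ : 0 < ρ₀) (hCT : 0 ≤ C_T)
    (hTaylor : ∀ Δθ : EuclideanSpace ℝ (Fin n), ‖Δθ‖ ≤ ρ₀ →
      |L₀ (θ₀ + Δθ) - L₀ θ₀ - (1 / 2) * quadForm H₀ Δθ| ≤ C_T * ‖Δθ‖ ^ 3) :
    ∀ ρ : ℝ, 0 < ρ → ρ ≤ ρ₀ →
      (∀ Δθ ∈ S, ‖Δθ‖ ≤ ρ →
          L₀ (θ₀ + Δθ) - L₀ θ₀ ≤ (β / 2) * epsSq * ρ ^ 2 + C_T * ρ ^ 3) ∧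
        sSup {r : ℝ | ∃ Δθ : EuclideanSpace ℝ (Fin n),
            Δθ ∈ S ∧ ‖Δθ‖ ≤ ρ ∧ r = L₀ (θ₀ + Δθ) - L₀ θ₀} ≤
          (β / 2) * epsSq * ρ ^ 2 + C_T * ρ ^ 3 :=
  stmt8_general n θ₀ L₀ S X μ m J M β hβ hMle hintH hintG H₀ hH₀ G hG epsSq heps ρ₀ C_T hCT hTaylor
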